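/- Let d ∈ ℕ and 0 < α < d. There exists a constant c₂ > 0, depending only on α and d, such that for every θ ∈ [0,1] and all Lebesgue-measurable sets A, B ⊆ ℝ^d of finite measure, ‖I_α^θ(χ_A, χ_B)‖_{L^{1,∞}(ℝ^d)} ≤ c₂ |A| |B|^{α/d}. -/

import Mathlib

/-!
By Chebyshev the weak `L¹` quasi-norm is at most the `L¹` norm, and by Tonelli and the
substitution `u = x + (θ - 1) y` the `L¹` norm of `I_α^θ(χ_A, χ_B)` is `∫ m(y) |y|^(α-d) dy`
with `m(y) = |A ∩ (B - y)|`, so that `m ≤ |A|` and `∫ m = |A| |B|`. Split at the radius `R`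
with `R^d = |B|`: by scaling, the ball contributes at most `|A| R^α J`, where
`J = ∫_{|y|<1} |y|^(α-d) dy` is finite because `α > 0`; outside the ball the kernel is at most
`R^(α-d)`, which gives `R^(α-d) |A| |B| = |A| R^α`. Hence `c₂ = J + 1` works.
-/

open MeasureTheory ENNReal

/-- The bilinear fractional integral operator
`I_α^θ(f,g)(x) = ∫_{ℝ^d} f(x + (θ−1)y) g(x + θy) |y|^{α−d} dy`. -/
noncomputable def Iop (d : ℕ) (α θ : ℝ)
    (f g : EuclideanSpace ℝ (Fin d) → ℝ≥0∞) (x : EuclideanSpace ℝ (Fin d)) : ℝ≥0∞ :=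
  ∫⁻ y : EuclideanSpace ℝ (Fin d),
    f (x + (θ - 1) • y) * g (x + θ • y) * ENNReal.ofReal (‖y‖ ^ (α - (d : ℝ)))

/-- The weak `L^r` quasi-norm `sup_{λ > 0} λ · |{x : h x > λ}|^{1/r}`. -/
noncomputable def wLp (d : ℕ) (r : ℝ)
    (h : EuclideanSpace ℝ (Fin d) → ℝ≥0∞) : ℝ≥0∞ :=
  ⨆ (lam : ℝ) (_ : 0 < lam),
    ENNReal.ofReal lam * (volume {x | ENNReal.ofReal lam < h x}) ^ (1 / r)

open Metric Module

section HaarMeasure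

variable {E : Type*} [NormedAddCommGroup E] [NormedSpace ℝ E]

theorem indicator_ball_norm_rpow_smul (s : ℝ) {R : ℝ} (hR : 0 < R) (z : E) :
    (ball (0 : E) R).indicator (fun y ↦ ENNReal.ofReal (‖y‖ ^ s)) (R • z) =
      ENNReal.ofReal (R ^ s) *
        (ball (0 : E) 1).indicator (fun y ↦ ENNReal.ofReal (‖y‖ ^ s)) z := by
  have hmem : R • z ∈ ball (0 : E) R ↔ z ∈ ball (0 : E) 1 := by
    simp only [mem_ball_zero_iff, norm_smul, Real.norm_of_nonneg hR.le]
    exact ⟨fun h ↦ lt_of_mul_lt_mul_left (by rwa [mul_one]) hR.le,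
      fun h ↦ by simpa using mul_lt_mul_of_pos_left h hR⟩
  by_cases hz : z ∈ ball (0 : E) 1
  · rw [Set.indicator_of_mem hz, Set.indicator_of_mem (hmem.2 hz), norm_smul,
      Real.norm_of_nonneg hR.le, Real.mul_rpow hR.le (norm_nonneg z),
      ENNReal.ofReal_mul (by positivity)]
  · rw [Set.indicator_of_notMem hz, Set.indicator_of_notMem (mt hmem.1 hz), mul_zero]

variable [FiniteDimensional ℝ E] [MeasurableSpace E] [BorelSpace E]
  (μ : Measure E) [μ.IsAddHaarMeasure]

theorem lintegral_comp_smul (f : E → ℝ≥0∞) {R : ℝ} (hR : R ≠ 0) :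
    ∫⁻ x, f (R • x) ∂μ = ENNReal.ofReal |(R ^ finrank ℝ E)⁻¹| * ∫⁻ x, f x ∂μ := by
  rw [← smul_eq_mul, ← lintegral_smul_measure, ← μ.map_addHaar_smul hR]
  exact (lintegral_map_equiv f (Homeomorph.smulOfNeZero R hR).toMeasurableEquiv).symm

theorem setLIntegral_ball_norm_rpow (s : ℝ) {R : ℝ} (hR : 0 < R) :
    ∫⁻ y in ball (0 : E) R, ENNReal.ofReal (‖y‖ ^ s) ∂μ =
      ENNReal.ofReal (R ^ (s + finrank ℝ E)) *
        ∫⁻ y in ball (0 : E) 1, ENNReal.ofReal (‖y‖ ^ s) ∂μ := by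
  have hw : Measurable fun y : E ↦ ENNReal.ofReal (‖y‖ ^ s) :=
    (measurable_norm.pow_const s).ennreal_ofReal
  have hscale := lintegral_comp_smul μ
    ((ball (0 : E) R).indicator fun y ↦ ENNReal.ofReal (‖y‖ ^ s)) hR.ne'
  simp only [indicator_ball_norm_rpow_smul s hR] at hscale
  rw [lintegral_const_mul _ (hw.indicator measurableSet_ball),
    lintegral_indicator measurableSet_ball, lintegral_indicator measurableSet_ball] at hscale
  have hRn : ENNReal.ofReal (R ^ finrank ℝ E) * ENNReal.ofReal |(R ^ finrank ℝ E)⁻¹| = 1 := by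
    rw [← ENNReal.ofReal_mul (by positivity), abs_of_pos (by positivity),
      mul_inv_cancel₀ (by positivity), ENNReal.ofReal_one]
  calc ∫⁻ y in ball (0 : E) R, ENNReal.ofReal (‖y‖ ^ s) ∂μ
      = ENNReal.ofReal (R ^ finrank ℝ E) * (ENNReal.ofReal |(R ^ finrank ℝ E)⁻¹| *
          ∫⁻ y in ball (0 : E) R, ENNReal.ofReal (‖y‖ ^ s) ∂μ) := by
        rw [← mul_assoc, hRn, one_mul]
    _ = ENNReal.ofReal (R ^ (s + finrank ℝ E)) *
          ∫⁻ y in ball (0 : E) 1, ENNReal.ofReal (‖y‖ ^ s) ∂μ := by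
        rw [← hscale, ← mul_assoc, ← ENNReal.ofReal_mul (by positivity), Real.rpow_add hR,
          Real.rpow_natCast, mul_comm (R ^ s)]

theorem setLIntegral_ball_norm_rpow_lt_top (hE : 0 < finrank ℝ E) {s : ℝ}
    (hs : -(finrank ℝ E : ℝ) < s) (r : ℝ) :
    ∫⁻ y in ball (0 : E) r, ENNReal.ofReal (‖y‖ ^ s) ∂μ < ∞ := by
  refine IntegrableOn.setLIntegral_lt_top
    (integrableOn_ball_of_norm_le_rpow (C := 1) (α := -s) hE (by linarith) ?_ ?_)
  · refine ae_of_all _ fun y ↦ ?_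
    rw [neg_neg, one_mul, Real.norm_of_nonneg (by positivity)]
  · exact (measurable_norm.pow_const s).aestronglyMeasurable

variable {f g k : E → ℝ≥0∞}

theorem measurable_comp_add_smul_mul (hf : Measurable f) (hg : Measurable g) (hk : Measurable k)
    (θ : ℝ) : Measurable fun p : E × E ↦ f (p.1 + (θ - 1) • p.2) * g (p.1 + θ • p.2) * k p.2 :=
  ((hf.comp (measurable_fst.add (measurable_snd.const_smul _))).mul
    (hg.comp (measurable_fst.add (measurable_snd.const_smul _)))).mul (hk.comp measurable_snd)

theorem lintegral_lintegral_comp_add_smul (hf : Measurable f) (hg : Measurable g)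
    (hk : Measurable k) (θ : ℝ) :
    ∫⁻ x, ∫⁻ y, f (x + (θ - 1) • y) * g (x + θ • y) * k y ∂μ ∂μ =
      ∫⁻ y, (∫⁻ u, f u * g (u + y) ∂μ) * k y ∂μ := by
  rw [lintegral_lintegral_swap (measurable_comp_add_smul_mul hf hg hk θ).aemeasurable]
  refine lintegral_congr fun y ↦ ?_
  have hfg : Measurable fun x ↦ f (x + (θ - 1) • y) * g (x + θ • y) :=
    (hf.comp (measurable_add_const _)).mul (hg.comp (measurable_add_const _))
  rw [lintegral_mul_const _ hfg]
  congr 1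
  have hshift : ∀ x : E, x + θ • y = x + (θ - 1) • y + y := fun x ↦ by
    rw [add_assoc, sub_smul, one_smul, sub_add_cancel]
  simp_rw [hshift]
  exact lintegral_add_right_eq_self (fun u ↦ f u * g (u + y)) _

theorem lintegral_lintegral_mul_comp_add (hf : Measurable f) (hg : Measurable g) :
    ∫⁻ y, ∫⁻ u, f u * g (u + y) ∂μ ∂μ = (∫⁻ u, f u ∂μ) * ∫⁻ u, g u ∂μ := by
  rw [lintegral_lintegral_swap ((hf.comp measurable_snd).mul
    (hg.comp (measurable_snd.add measurable_fst))).aemeasurable, ← lintegral_mul_const _ hf]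
  refine lintegral_congr fun u ↦ ?_
  have hgu : Measurable fun y ↦ g (u + y) := hg.comp (measurable_const_add u)
  rw [lintegral_const_mul _ hgu, lintegral_add_left_eq_self g u]

variable {m : E → ℝ≥0∞} {a : ℝ≥0∞} {α : ℝ}

theorem lintegral_mul_norm_rpow_le_of_le (hm : ∀ y, m y ≤ a) (hα : α ≤ finrank ℝ E)
    {R : ℝ} (hR : 0 < R) :
    ∫⁻ y, m y * ENNReal.ofReal (‖y‖ ^ (α - finrank ℝ E)) ∂μ ≤
      a * (ENNReal.ofReal (R ^ α) *
          ∫⁻ y in ball (0 : E) 1, ENNReal.ofReal (‖y‖ ^ (α - finrank ℝ E)) ∂μ) +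
        ENNReal.ofReal (R ^ (α - finrank ℝ E)) * ∫⁻ y, m y ∂μ := by
  have hw : Measurable fun y : E ↦ ENNReal.ofReal (‖y‖ ^ (α - finrank ℝ E)) :=
    (measurable_norm.pow_const _).ennreal_ofReal
  have hfar : ∀ y ∈ (ball (0 : E) R)ᶜ, m y * ENNReal.ofReal (‖y‖ ^ (α - finrank ℝ E)) ≤
      ENNReal.ofReal (R ^ (α - finrank ℝ E)) * m y := fun y hy ↦ by
    rw [mul_comm]
    refine mul_le_mul_left (ENNReal.ofReal_le_ofReal ?_) _
    exact Real.rpow_le_rpow_of_nonpos hR (by simpa using hy) (by linarith)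
  calc ∫⁻ y, m y * ENNReal.ofReal (‖y‖ ^ (α - finrank ℝ E)) ∂μ
      = ∫⁻ y in ball (0 : E) R, m y * ENNReal.ofReal (‖y‖ ^ (α - finrank ℝ E)) ∂μ +
          ∫⁻ y in (ball (0 : E) R)ᶜ, m y * ENNReal.ofReal (‖y‖ ^ (α - finrank ℝ E)) ∂μ :=
        (lintegral_add_compl _ measurableSet_ball).symm
    _ ≤ ∫⁻ y in ball (0 : E) R, a * ENNReal.ofReal (‖y‖ ^ (α - finrank ℝ E)) ∂μ +
          ∫⁻ y in (ball (0 : E) R)ᶜ, ENNReal.ofReal (R ^ (α - finrank ℝ E)) * m y ∂μ :=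
        add_le_add (setLIntegral_mono' measurableSet_ball fun y _ ↦ mul_le_mul_left (hm y) _)
          (setLIntegral_mono' measurableSet_ball.compl hfar)
    _ ≤ a * ∫⁻ y in ball (0 : E) R, ENNReal.ofReal (‖y‖ ^ (α - finrank ℝ E)) ∂μ +
          ENNReal.ofReal (R ^ (α - finrank ℝ E)) * ∫⁻ y, m y ∂μ := by
        rw [lintegral_const_mul _ hw, ← lintegral_const_mul' _ _ ofReal_ne_top]
        exact add_le_add le_rfl (setLIntegral_le_lintegral _ _)
    _ = _ := by rw [setLIntegral_ball_norm_rpow μ _ hR, sub_add_cancel]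

theorem lintegral_mul_norm_rpow_le (hE : 0 < finrank ℝ E) (hα : α ≤ finrank ℝ E)
    (hm : AEMeasurable m μ) (hma : ∀ y, m y ≤ a) {b : ℝ≥0∞} (hb : b ≠ ∞)
    (hmb : ∫⁻ y, m y ∂μ = a * b) :
    ∫⁻ y, m y * ENNReal.ofReal (‖y‖ ^ (α - finrank ℝ E)) ∂μ ≤
      (∫⁻ y in ball (0 : E) 1, ENNReal.ofReal (‖y‖ ^ (α - finrank ℝ E)) ∂μ + 1) *
        a * b ^ (α / finrank ℝ E) := by
  rcases eq_or_ne b 0 with rfl | hb0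
  · have hm0 : m =ᵐ[μ] 0 := (lintegral_eq_zero_iff' hm).1 (by rw [hmb, mul_zero])
    calc ∫⁻ y, m y * ENNReal.ofReal (‖y‖ ^ (α - finrank ℝ E)) ∂μ = ∫⁻ _, 0 ∂μ :=
          lintegral_congr_ae (by filter_upwards [hm0] with y hy; simp [hy])
      _ ≤ _ := by rw [lintegral_zero]; exact zero_le
  have hn : (0 : ℝ) < finrank ℝ E := Nat.cast_pos.2 hE
  have hbr : 0 < b.toReal := ENNReal.toReal_pos hb0 hb
  obtain ⟨R, hR, hRn⟩ : ∃ R > 0, R ^ (finrank ℝ E : ℝ) = b.toReal :=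
    ⟨_, Real.rpow_pos_of_pos hbr _, by rw [← Real.rpow_mul hbr.le, inv_mul_cancel₀ hn.ne',
      Real.rpow_one]⟩
  have hb_eq : b = ENNReal.ofReal (R ^ (finrank ℝ E : ℝ)) := by rw [hRn, ofReal_toReal hb]
  have hRα : ENNReal.ofReal (R ^ α) = b ^ (α / finrank ℝ E) := by
    rw [hb_eq, ENNReal.ofReal_rpow_of_pos (by positivity), ← Real.rpow_mul hR.le,
      mul_div_cancel₀ _ hn.ne']
  have hRb : ENNReal.ofReal (R ^ (α - finrank ℝ E)) * b = ENNReal.ofReal (R ^ α) := by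
    rw [hb_eq, ← ENNReal.ofReal_mul (by positivity), ← Real.rpow_add hR, sub_add_cancel]
  calc _ ≤ _ := lintegral_mul_norm_rpow_le_of_le μ hma hα hR
    _ = _ := by rw [hmb, mul_left_comm _ a, hRb, ← hRα]; ring

end HaarMeasure

theorem wLp_one_le_lintegral (d : ℕ) {h : EuclideanSpace ℝ (Fin d) → ℝ≥0∞}
    (hh : AEMeasurable h) : wLp d 1 h ≤ ∫⁻ x, h x := by
  refine iSup₂_le fun t _ ↦ ?_
  rw [div_one, ENNReal.rpow_one]
  calc ENNReal.ofReal t * volume {x | ENNReal.ofReal t < h x}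
      ≤ ENNReal.ofReal t * volume {x | ENNReal.ofReal t ≤ h x} := by
        gcongr with x; exact le_of_lt
    _ ≤ ∫⁻ x, h x := mul_meas_ge_le_lintegral₀ hh _

theorem measurable_Iop (d : ℕ) (α θ : ℝ) {f g : EuclideanSpace ℝ (Fin d) → ℝ≥0∞}
    (hf : Measurable f) (hg : Measurable g) : Measurable (Iop d α θ f g) :=
  (measurable_comp_add_smul_mul hf hg (measurable_norm.pow_const _).ennreal_ofReal
    θ).lintegral_prod_right'

theorem lintegral_Iop_indicator_le {d : ℕ} {α : ℝ} (hd : 0 < d) (hαd : α ≤ d) (θ : ℝ)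
    {A B : Set (EuclideanSpace ℝ (Fin d))} (hA : MeasurableSet A) (hB : MeasurableSet B)
    (hBfin : volume B ≠ ∞) :
    ∫⁻ x, Iop d α θ (A.indicator 1) (B.indicator 1) x ≤
      ((∫⁻ y in ball (0 : EuclideanSpace ℝ (Fin d)) 1, ENNReal.ofReal (‖y‖ ^ (α - d))) + 1) *
        volume A * volume B ^ (α / d) := by
  have hIA : Measurable (A.indicator (1 : EuclideanSpace ℝ (Fin d) → ℝ≥0∞)) :=
    measurable_one.indicator hA
  have hIB : Measurable (B.indicator (1 : EuclideanSpace ℝ (Fin d) → ℝ≥0∞)) :=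
    measurable_one.indicator hB
  have hm_le : ∀ y, ∫⁻ u, A.indicator 1 u * B.indicator 1 (u + y) ≤ volume A := fun y ↦
    (lintegral_mono fun u ↦ mul_le_of_le_one_right zero_le
      (Set.indicator_le_self _ _ (u + y))).trans_eq (lintegral_indicator_one hA)
  have hm_int : ∫⁻ y, ∫⁻ u, A.indicator 1 u * B.indicator 1 (u + y) = volume A * volume B := by
    rw [lintegral_lintegral_mul_comp_add volume hIA hIB, lintegral_indicator_one hA,
      lintegral_indicator_one hB]
  have hbound := lintegral_mul_norm_rpow_le volume (α := α)
    (by rwa [finrank_euclideanSpace_fin]) (by rwa [finrank_euclideanSpace_fin])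
    ((hIA.comp measurable_fst).mul (hIB.comp measurable_add)).lintegral_prod_left'.aemeasurable
    hm_le hBfin hm_int
  rw [finrank_euclideanSpace_fin] at hbound
  exact (lintegral_lintegral_comp_add_smul volume hIA hIB
    (measurable_norm.pow_const _).ennreal_ofReal θ).trans_le hbound

theorem stmt10 (d : ℕ) (α : ℝ) (hα0 : 0 < α) (hαd : α < d) :
    ∃ c₂ : ℝ, 0 < c₂ ∧
      ∀ θ : ℝ, θ ∈ Set.Icc (0 : ℝ) 1 →
        ∀ A B : Set (EuclideanSpace ℝ (Fin d)),
          MeasurableSet A → MeasurableSet B → volume A < ∞ → volume B < ∞ →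
          wLp d (1 : ℝ) (Iop d α θ (A.indicator 1) (B.indicator 1)) ≤
            ENNReal.ofReal c₂ * volume A * (volume B) ^ (α / (d : ℝ)) := by
  have hd : 0 < d := by exact_mod_cast hα0.trans hαd
  set J := ∫⁻ y in ball (0 : EuclideanSpace ℝ (Fin d)) 1, ENNReal.ofReal (‖y‖ ^ (α - d))
  have hJ : J + 1 ≠ ∞ := by
    refine add_ne_top.2 ⟨(setLIntegral_ball_norm_rpow_lt_top volume ?_ ?_ 1).ne, one_ne_top⟩
    all_goals rw [finrank_euclideanSpace_fin]
    exacts [hd, by linarith]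
  refine ⟨(J + 1).toReal, ENNReal.toReal_pos (by simp) hJ, ?_⟩
  intro θ _ A B hA hB _ hBfin
  rw [ofReal_toReal hJ]
  calc wLp d 1 (Iop d α θ (A.indicator 1) (B.indicator 1))
      ≤ ∫⁻ x, Iop d α θ (A.indicator 1) (B.indicator 1) x :=
        wLp_one_le_lintegral d (measurable_Iop d α θ (measurable_one.indicator hA)
          (measurable_one.indicator hB)).aemeasurable
    _ ≤ (J + 1) * volume A * volume B ^ (α / d) :=
        lintegral_Iop_indicator_le hd hαd.le θ hA hB hBfin.ne
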